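/- Let k be a field, m ≥ 1, r ≥ 1. The k-subalgebra of k[X_0,…,X_m, T_1,…,T_r] generated by the products X_iT_j (0 ≤ i ≤ m, 1 ≤ j ≤ r) is isomorphic, as a k-algebra, to the quotient of the polynomial ring k[Y_{ij} : 0 ≤ i ≤ m, 1 ≤ j ≤ r] by the ideal generated by the 2×2 minors Y_{ij}Y_{kl} − Y_{il}Y_{kj}. -/
import Mathlib

open MvPolynomial Finsupp

namespace S16

variable {k : Type*} [Field k] {m r : ℕ}

noncomputable def w (m r : ℕ) : ((Fin (m+1) × Fin r) →₀ ℕ) →ₗ[ℕ] ((Fin (m+1) ⊕ Fin r) →₀ ℕ) :=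
  Finsupp.linearCombination ℕ fun s =>
    Finsupp.single (Sum.inl s.1) 1 + Finsupp.single (Sum.inr s.2) 1

noncomputable def phi (k : Type*) [Field k] (m r : ℕ) :
    MvPolynomial (Fin (m+1) × Fin r) k →ₐ[k] MvPolynomial (Fin (m+1) ⊕ Fin r) k :=
  aeval fun q => X (Sum.inl q.1) * X (Sum.inr q.2)

lemma prod_monomial_one {α τ : Type*} (F : Finset α) (g : α → (τ →₀ ℕ)) :
    ∏ x ∈ F, (monomial (g x) (1:k)) = monomial (∑ x ∈ F, g x) 1 := by
  induction F using Finset.cons_induction with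
  | empty => simp
  | cons a F h ih => rw [Finset.prod_cons, Finset.sum_cons, ih, monomial_mul, one_mul]

lemma X_mul_X (i : Fin (m+1)) (j : Fin r) :
    (X (Sum.inl i) * X (Sum.inr j) : MvPolynomial (Fin (m+1) ⊕ Fin r) k)
      = monomial (Finsupp.single (Sum.inl i) 1 + Finsupp.single (Sum.inr j) 1) 1 := by
  rw [X, X, monomial_mul, one_mul]

lemma phi_monomial (a : (Fin (m+1) × Fin r) →₀ ℕ) (c : k) :
    phi k m r (monomial a c) = monomial (w m r a) c := by
  rw [phi, aeval_monomial]
  have : (a.prod fun s e => (X (Sum.inl s.1) * X (Sum.inr s.2) :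
      MvPolynomial (Fin (m+1) ⊕ Fin r) k) ^ e)
      = monomial (w m r a) 1 := by
    rw [Finsupp.prod]
    have h1 : ∀ s ∈ a.support, (X (Sum.inl s.1) * X (Sum.inr s.2) :
        MvPolynomial (Fin (m+1) ⊕ Fin r) k) ^ a s
        = monomial (a s • (Finsupp.single (Sum.inl s.1) 1 + Finsupp.single (Sum.inr s.2) 1)) 1 := by
      intro s _
      rw [X_mul_X, monomial_pow, one_pow]
    rw [Finset.prod_congr rfl h1, prod_monomial_one]
    have hw : w m r a = ∑ s ∈ a.support,
        a s • (Finsupp.single (Sum.inl s.1) 1 + Finsupp.single (Sum.inr s.2) 1) := by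
      unfold w
      rw [Finsupp.linearCombination_apply, Finsupp.sum]
    rw [hw]
  rw [this, algebraMap_eq, C_mul_monomial, mul_one]


lemma w_single (s : Fin (m+1) × Fin r) :
    w m r (Finsupp.single s 1) =
      Finsupp.single (Sum.inl s.1) 1 + Finsupp.single (Sum.inr s.2) 1 := by
  simp [w, Finsupp.linearCombination_single]

lemma w_inl (a : (Fin (m+1) × Fin r) →₀ ℕ) (i : Fin (m+1)) :
    w m r a (Sum.inl i) = ∑ j, a (i, j) := by
  rw [w, Finsupp.linearCombination_apply, Finsupp.sum_fintype _ _ (by intro; simp)]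
  rw [Finsupp.finset_sum_apply, Fintype.sum_prod_type]
  simp [Finsupp.single_apply, Finset.sum_ite_eq, eq_comm]

lemma w_inr (a : (Fin (m+1) × Fin r) →₀ ℕ) (j : Fin r) :
    w m r a (Sum.inr j) = ∑ i, a (i, j) := by
  rw [w, Finsupp.linearCombination_apply, Finsupp.sum_fintype _ _ (by intro; simp)]
  rw [Finsupp.finset_sum_apply, Fintype.sum_prod_type]
  simp [Finsupp.single_apply, Finset.sum_ite_eq, eq_comm]

/-- distance measure -/
def mu (a b : (Fin (m+1) × Fin r) →₀ ℕ) : ℕ :=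
  ∑ s : Fin (m+1) × Fin r, ((a s - b s) + (b s - a s))

lemma mu_comm (a b : (Fin (m+1) × Fin r) →₀ ℕ) : mu a b = mu b a := by
  unfold mu; apply Finset.sum_congr rfl; intro s _; omega

lemma exists_lt_of_sum_eq {α : Type*} [Fintype α] {f g : α → ℕ}
    (h : ∑ x, f x = ∑ x, g x) {x0 : α} (hx : g x0 < f x0) : ∃ x, f x < g x := by
  by_contra hc
  push_neg at hc
  have : ∑ x, g x < ∑ x, f x :=
    Finset.sum_lt_sum (fun i _ => hc i) ⟨x0, Finset.mem_univ _, hx⟩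
  omega

lemma step (I : Ideal (MvPolynomial (Fin (m+1) × Fin r) k))
    (hI : ∀ (i i' : Fin (m+1)) (j j' : Fin r),
      X (i, j) * X (i', j') - X (i, j') * X (i', j) ∈ I)
    (a a' : (Fin (m+1) × Fin r) →₀ ℕ) (h : w m r a = w m r a')
    (i : Fin (m+1)) (j : Fin r) (hs : a' (i, j) < a (i, j)) :
    ∃ b, (monomial a (1:k) - monomial b 1 ∈ I) ∧ w m r b = w m r a ∧ mu b a' < mu a a' := by
  -- find j' and i'
  have hrow : ∑ j'', a (i, j'') = ∑ j'', a' (i, j'') := by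
    rw [← w_inl, ← w_inl, h]
  obtain ⟨j', hj'⟩ : ∃ j', a (i, j') < a' (i, j') := exists_lt_of_sum_eq hrow hs
  have hcol : ∑ i'', a' (i'', j') = ∑ i'', a (i'', j') := by
    rw [← w_inr, ← w_inr, h]
  obtain ⟨i', hi'⟩ : ∃ i', a' (i', j') < a (i', j') := exists_lt_of_sum_eq hcol hj'
  have hii : i ≠ i' := by rintro rfl; omega
  have hjj : j ≠ j' := by rintro rfl; omega
  have hne : ((i, j) : Fin (m+1) × Fin r) ≠ (i', j') := by
    simp [Prod.ext_iff]; tauto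
  -- decompose a
  obtain ⟨c, hc⟩ : ∃ c, a = c + Finsupp.single (i, j) 1 + Finsupp.single (i', j') 1 := by
    refine ⟨a - Finsupp.single (i, j) 1 - Finsupp.single (i', j') 1, ?_⟩
    ext s
    rcases eq_or_ne s ((i, j) : Fin (m+1) × Fin r) with rfl | h1
    · simp [Finsupp.single_apply, hne, Ne.symm hne]
      omega
    · rcases eq_or_ne s ((i', j') : Fin (m+1) × Fin r) with rfl | h2
      · simp [Finsupp.single_apply, hne, Ne.symm hne]
        omega
      · simp [Finsupp.single_apply, Ne.symm h1, Ne.symm h2]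
  refine ⟨c + Finsupp.single (i, j') 1 + Finsupp.single (i', j) 1, ?_, ?_, ?_⟩
  · have e1 : monomial a (1:k) = monomial c 1 * X (i, j) * X (i', j') := by
      rw [hc, monomial_add_single, monomial_add_single, pow_one, pow_one]
    have e2 : monomial (c + Finsupp.single (i, j') 1 + Finsupp.single (i', j) 1) (1:k)
        = monomial c 1 * X (i, j') * X (i', j) := by
      rw [monomial_add_single, monomial_add_single, pow_one, pow_one]
    rw [e1, e2]
    have : monomial c (1:k) * X (i, j) * X (i', j') - monomial c 1 * X (i, j') * X (i', j)
        = monomial c 1 * (X (i, j) * X (i', j') - X (i, j') * X (i', j)) := by ring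
    rw [this]
    exact Ideal.mul_mem_left _ _ (hI i i' j j')
  · rw [hc]
    simp only [map_add, w_single]
    abel
  · rw [hc] at hs hj' hi' ⊢
    simp only [Finsupp.add_apply, Finsupp.single_apply, Prod.mk.injEq] at hs hj' hi'
    simp only [hjj, hii, Ne.symm hjj, Ne.symm hii, and_true, and_false, true_and, false_and,
      if_true, if_false, ite_false, ite_true, and_self, not_true, not_false_iff] at hs hj' hi'
    unfold mu
    set D : Finset (Fin (m+1) × Fin r) := {(i,j),(i,j'),(i',j),(i',j')} with hDdef
    have hD : D ⊆ Finset.univ := Finset.subset_univ _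
    rw [← Finset.sum_sdiff hD, ← Finset.sum_sdiff hD]
    have hoff : ∀ s ∈ Finset.univ \ D,
        (((c + Finsupp.single (i,j') 1 + Finsupp.single (i',j) 1 : (Fin (m+1) × Fin r) →₀ ℕ)) s - a' s
          + (a' s - ((c + Finsupp.single (i,j') 1 + Finsupp.single (i',j) 1 : (Fin (m+1) × Fin r) →₀ ℕ)) s))
        = (((c + Finsupp.single (i,j) 1 + Finsupp.single (i',j') 1 : (Fin (m+1) × Fin r) →₀ ℕ)) s - a' s
          + (a' s - ((c + Finsupp.single (i,j) 1 + Finsupp.single (i',j') 1 : (Fin (m+1) × Fin r) →₀ ℕ)) s)) := by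
      intro s hsD
      rw [hDdef] at hsD
      simp only [Finset.mem_sdiff, Finset.mem_insert, Finset.mem_singleton, not_or] at hsD
      obtain ⟨-, n1, n2, n3, n4⟩ := hsD
      simp [Finsupp.single_apply, Ne.symm n1, Ne.symm n2, Ne.symm n3, Ne.symm n4]
    rw [Finset.sum_congr rfl hoff]
    apply Nat.add_lt_add_left
    have hm1 : ((i,j) : Fin (m+1) × Fin r) ∉ ({(i,j'),(i',j),(i',j')} : Finset _) := by
      simp [Prod.ext_iff, hii, hjj]
    have hm2 : ((i,j') : Fin (m+1) × Fin r) ∉ ({(i',j),(i',j')} : Finset _) := by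
      simp [Prod.ext_iff, hii]
    have hm3 : ((i',j) : Fin (m+1) × Fin r) ∉ ({(i',j')} : Finset _) := by
      simp [Prod.ext_iff, hjj]
    rw [hDdef]
    rw [Finset.sum_insert hm1, Finset.sum_insert hm2, Finset.sum_insert hm3,
      Finset.sum_singleton, Finset.sum_insert hm1, Finset.sum_insert hm2,
      Finset.sum_insert hm3, Finset.sum_singleton]
    simp only [Finsupp.add_apply, Finsupp.single_apply, Prod.mk.injEq]
    simp only [hjj, hii, Ne.symm hjj, Ne.symm hii, and_true, and_false, true_and, and_self,
      if_true, if_false, ite_false, ite_true]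
    omega


lemma congr_lemma (I : Ideal (MvPolynomial (Fin (m+1) × Fin r) k))
    (hI : ∀ (i i' : Fin (m+1)) (j j' : Fin r),
      X (i, j) * X (i', j') - X (i, j') * X (i', j) ∈ I) :
    ∀ n (a a' : (Fin (m+1) × Fin r) →₀ ℕ), mu a a' ≤ n → w m r a = w m r a' →
      monomial a (1:k) - monomial a' 1 ∈ I := by
  intro n
  induction n with
  | zero =>
    intro a a' hmu hw
    have : a = a' := by
      ext s
      have h0 : (a s - a' s) + (a' s - a s) = 0 := by
        have := Finset.sum_eq_zero_iff.mp (Nat.le_zero.mp hmu) s (Finset.mem_univ s)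
        exact this
      omega
    rw [this, sub_self]
    exact zero_mem I
  | succ n ih =>
    intro a a' hmu hw
    rcases eq_or_ne a a' with rfl | hne
    · rw [sub_self]; exact zero_mem I
    · obtain ⟨s, hs⟩ : ∃ s, a s ≠ a' s := by
        by_contra hc
        push_neg at hc
        exact hne (Finsupp.ext hc)
      obtain ⟨i, j⟩ := s
      rcases Nat.lt_or_ge (a' (i,j)) (a (i,j)) with hlt | hge
      · obtain ⟨b, hb1, hb2, hb3⟩ := step I hI a a' hw i j hlt
        have hbn : mu b a' ≤ n := by omega
        have := ih b a' hbn (hb2.trans hw)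
        have hsum : monomial a (1:k) - monomial a' 1
            = (monomial a 1 - monomial b 1) + (monomial b 1 - monomial a' 1) := by ring
        rw [hsum]
        exact add_mem hb1 this
      · have hlt : a (i,j) < a' (i,j) := by omega
        obtain ⟨b, hb1, hb2, hb3⟩ := step I hI a' a hw.symm i j hlt
        have hbn : mu b a ≤ n := by
          rw [mu_comm a a'] at hmu; omega
        have := ih b a hbn (hb2.trans hw.symm)
        have hsum : monomial a (1:k) - monomial a' 1
            = -((monomial a' 1 - monomial b 1) + (monomial b 1 - monomial a 1)) := by ring
        rw [hsum]
        exact neg_mem (add_mem hb1 this)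


lemma phi_eq_sum (p : MvPolynomial (Fin (m+1) × Fin r) k) :
    phi k m r p = ∑ a ∈ p.support, monomial (w m r a) (coeff a p) := by
  conv_lhs => rw [p.as_sum]
  rw [map_sum]
  exact Finset.sum_congr rfl fun a _ => phi_monomial a _

lemma ker_sub (I : Ideal (MvPolynomial (Fin (m+1) × Fin r) k))
    (hI : ∀ (i i' : Fin (m+1)) (j j' : Fin r),
      X (i, j) * X (i', j') - X (i, j') * X (i', j) ∈ I) :
    ∀ n (p : MvPolynomial (Fin (m+1) × Fin r) k), p.support.card ≤ n →
      phi k m r p = 0 → p ∈ I := by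
  intro n
  induction n with
  | zero =>
    intro p hc h0
    have : p = 0 := MvPolynomial.support_eq_empty.mp (Finset.card_eq_zero.mp (Nat.le_zero.mp hc))
    rw [this]; exact zero_mem I
  | succ n ih =>
    intro p hc hp
    rcases eq_or_ne p 0 with rfl | hne
    · exact zero_mem I
    obtain ⟨a, ha⟩ := (MvPolynomial.support_nonempty.mpr hne)
    set F := p.support.filter (fun a' => w m r a' = w m r a) with hF
    have haF : a ∈ F := Finset.mem_filter.mpr ⟨ha, rfl⟩
    have hsum : ∑ a' ∈ F, coeff a' p = 0 := by
      have h0 : coeff (w m r a) (phi k m r p) = 0 := by rw [hp, coeff_zero]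
      rw [phi_eq_sum, coeff_sum] at h0
      simp only [coeff_monomial] at h0
      rw [hF, Finset.sum_filter]
      exact h0
    set q := p - ∑ a' ∈ F, monomial a' (coeff a' p) with hq
    have hcoeq : ∀ a'', coeff a'' q = if a'' ∈ F then 0 else coeff a'' p := by
      intro a''
      rw [hq, coeff_sub, coeff_sum]
      simp only [coeff_monomial]
      rw [Finset.sum_ite_eq' F a'' (fun x => coeff x p)]
      split_ifs
      · exact sub_self _
      · exact sub_zero _
    have hqsupp : q.support ⊆ p.support.erase a := by
      intro a'' h''
      rw [MvPolynomial.mem_support_iff, hcoeq] at h''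
      rw [Finset.mem_erase]
      by_cases hmem : a'' ∈ F
      · rw [if_pos hmem] at h''; exact absurd rfl h''
      · rw [if_neg hmem] at h''
        refine ⟨fun hEq => hmem (hEq ▸ haF), MvPolynomial.mem_support_iff.mpr h''⟩
    have hpq : p - q = ∑ a' ∈ F, monomial a' (coeff a' p) := by rw [hq]; ring
    have hmem : p - q ∈ I := by
      rw [hpq]
      have hterm : ∀ a' ∈ F, monomial a' (coeff a' p)
          = C (coeff a' p) * (monomial a' 1 - monomial a 1) + C (coeff a' p) * monomial a 1 := by
        intro a' _
        rw [mul_sub, C_mul_monomial, C_mul_monomial]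
        ring_nf
      rw [Finset.sum_congr rfl hterm, Finset.sum_add_distrib, ← Finset.sum_mul, ← map_sum,
        hsum, map_zero, zero_mul, add_zero]
      refine Ideal.sum_mem I fun a' ha' => Ideal.mul_mem_left _ _ ?_
      exact congr_lemma I hI (mu a' a) a' a le_rfl (Finset.mem_filter.mp ha').2
    have hphiq : phi k m r q = 0 := by
      rw [hq, map_sub, hp, zero_sub, neg_eq_zero, map_sum]
      have hterm : ∀ a' ∈ F, phi k m r (monomial a' (coeff a' p))
          = monomial (w m r a) (coeff a' p) := by
        intro a' ha'
        rw [phi_monomial, (Finset.mem_filter.mp ha').2]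
      rw [Finset.sum_congr rfl hterm, ← map_sum (monomial (w m r a)), hsum, map_zero]
    have hcard : q.support.card ≤ n := by
      have h1 := Finset.card_le_card hqsupp
      rw [Finset.card_erase_of_mem ha] at h1
      omega
    have hqI := ih q hcard hphiq
    have : p = q + (p - q) := by ring
    rw [this]
    exact add_mem hqI hmem

end S16

open MvPolynomial

/-- For a field `k` and `m, r ≥ 1`, the `k`-subalgebra of
`k[X_0,…,X_m,T_1,…,T_r]` generated by the products `XᵢTⱼ` is isomorphic as a `k`-algebra
to `k[Y_{ij}] / (Y_{ij}Y_{kl} - Y_{il}Y_{kj})`, the quotient by the ideal of `2×2` minors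
of the `(m+1)×r` matrix `(Y_{ij})`. -/
theorem stmt_16 (k : Type*) [Field k] (m r : ℕ) (hm : 1 ≤ m) (hr : 1 ≤ r) :
    Nonempty
      ((MvPolynomial (Fin (m + 1) × Fin r) k ⧸
        Ideal.span {p : MvPolynomial (Fin (m + 1) × Fin r) k |
          ∃ (i i' : Fin (m + 1)) (j j' : Fin r),
            p = X (i, j) * X (i', j') - X (i, j') * X (i', j)})
      ≃ₐ[k]
      Algebra.adjoin k (Set.range fun q : Fin (m + 1) × Fin r =>
        (X (Sum.inl q.1) * X (Sum.inr q.2) :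
          MvPolynomial (Fin (m + 1) ⊕ Fin r) k))) := by
  set I : Ideal (MvPolynomial (Fin (m + 1) × Fin r) k) :=
    Ideal.span {p : MvPolynomial (Fin (m + 1) × Fin r) k |
      ∃ (i i' : Fin (m + 1)) (j j' : Fin r),
        p = X (i, j) * X (i', j') - X (i, j') * X (i', j)} with hIdef
  have hI : ∀ (i i' : Fin (m + 1)) (j j' : Fin r),
      X (i, j) * X (i', j') - X (i, j') * X (i', j) ∈ I :=
    fun i i' j j' => Ideal.subset_span ⟨i, i', j, j', rfl⟩
  have hker : RingHom.ker (S16.phi k m r) = I := by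
    apply le_antisymm
    · intro p hp
      exact S16.ker_sub I hI p.support.card p le_rfl (RingHom.mem_ker.mp hp)
    · rw [hIdef, Ideal.span_le]
      rintro p ⟨i, i', j, j', rfl⟩
      have : S16.phi k m r (X (i, j) * X (i', j') - X (i, j') * X (i', j)) = 0 := by
        simp only [S16.phi, map_sub, map_mul, aeval_X]
        ring
      exact RingHom.mem_ker.mpr this
  have hrange : (S16.phi k m r).range
      = Algebra.adjoin k (Set.range fun q : Fin (m + 1) × Fin r =>
          (X (Sum.inl q.1) * X (Sum.inr q.2) :
            MvPolynomial (Fin (m + 1) ⊕ Fin r) k)) :=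
    (Algebra.adjoin_range_eq_range_aeval k _).symm
  exact ⟨((Ideal.quotientEquivAlgOfEq k hker.symm).trans
    (Ideal.quotientKerEquivRange (S16.phi k m r))).trans
    (Subalgebra.equivOfEq _ _ hrange)⟩
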